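/- Let u : U → ℝ³ be a smooth vector field with tangential part u_T := P u and normal coordinate u_N := u·n, let E(u) := ½(∇_Γ u + (∇_Γ u)ᵀ) and B := b_{αβ}(g^α⊗g^β). Then the normal component of the surface divergence of the strain tensor satisfies n · div_Γ E(u) = tr( B ∇_Γ u_T ) − u_N tr( B² ). -/

import Mathlib

noncomputable section

open scoped BigOperators Matrix

abbrev V3 := Fin 3 → ℝ
abbrev V2 := Fin 2 → ℝ

/-- Euclidean dot product on `ℝ³`. -/
def dot3 (a b : V3) : ℝ := ∑ i, a i * b i

/-- Euclidean norm on `ℝ³`. -/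
def norm3 (a : V3) : ℝ := Real.sqrt (dot3 a a)

/-- Partial derivative `∂_α` of a field on (part of) `ℝ²`. -/
def pd2 {E : Type*} [NormedAddCommGroup E] [NormedSpace ℝ E]
    (f : V2 → E) (α : Fin 2) (ξ : V2) : E :=
  fderiv ℝ f ξ (Pi.single α 1)

/-- Partial derivative `∂_i` of a field on (part of) `ℝ³`. -/
def pd3 {E : Type*} [NormedAddCommGroup E] [NormedSpace ℝ E]
    (f : V3 → E) (i : Fin 3) (q : V3) : E :=
  fderiv ℝ f q (Pi.single i 1)

/-- Covariant tangent basis `g_α = ∂_α R`. -/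
def gcov (R : V2 → V3) (α : Fin 2) (ξ : V2) : V3 := pd2 R α ξ

/-- Metric tensor `g_{αβ}`. -/
def gmat (R : V2 → V3) (ξ : V2) : Matrix (Fin 2) (Fin 2) ℝ :=
  Matrix.of fun α β => dot3 (gcov R α ξ) (gcov R β ξ)

/-- Inverse metric `g^{αβ}`. -/
def ginv (R : V2 → V3) (ξ : V2) : Matrix (Fin 2) (Fin 2) ℝ := (gmat R ξ)⁻¹

/-- Contravariant basis `g^α = g^{αβ} g_β`. -/
def gcon (R : V2 → V3) (α : Fin 2) (ξ : V2) : V3 :=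
  ∑ β, ginv R ξ α β • gcov R β ξ

/-- Unit normal `n = (g₁ × g₂)/‖g₁ × g₂‖`. -/
def nrm (R : V2 → V3) (ξ : V2) : V3 :=
  (norm3 (crossProduct (gcov R 0 ξ) (gcov R 1 ξ)))⁻¹ •
    crossProduct (gcov R 0 ξ) (gcov R 1 ξ)

/-- Tangential projection `P = I - n nᵀ`. -/
def Pmat (R : V2 → V3) (ξ : V2) : Matrix (Fin 3) (Fin 3) ℝ :=
  1 - Matrix.of fun i j => nrm R ξ i * nrm R ξ j

/-- Christoffel symbols `Γ^σ_{αβ} = g^σ · ∂_α g_β`. -/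
def chris (R : V2 → V3) (σ α β : Fin 2) (ξ : V2) : ℝ :=
  dot3 (gcon R σ ξ) (pd2 (gcov R β) α ξ)

/-- Second fundamental form `b_{αβ} = n · ∂_α g_β`. -/
def bcov (R : V2 → V3) (α β : Fin 2) (ξ : V2) : ℝ :=
  dot3 (nrm R ξ) (pd2 (gcov R β) α ξ)

/-- Mixed components `b^β_α = g^{βσ} b_{σα}`. -/
def bmix (R : V2 → V3) (β α : Fin 2) (ξ : V2) : ℝ :=
  ∑ σ, ginv R ξ β σ * bcov R σ α ξ

/-- Outer product `(a ⊗ b) w = (b·w) a` as a matrix. -/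
def outer (a b : V3) : Matrix (Fin 3) (Fin 3) ℝ := Matrix.of fun i j => a i * b j

/-- Shape operator `B = b_{αβ} (g^α ⊗ g^β)`. -/
def shapeOp (R : V2 → V3) (ξ : V2) : Matrix (Fin 3) (Fin 3) ℝ :=
  ∑ α, ∑ β, bcov R α β ξ • outer (gcon R α ξ) (gcon R β ξ)

/-- Cartesian (Euclidean) gradient of a scalar field on `ℝ³`. -/
def grad3 (f : V3 → ℝ) (y : V3) : V3 := fun i => fderiv ℝ f y (Pi.single i 1)

/-- Cartesian Jacobian `(∇̂ u)_{ij} = ∂_j u_i` of a vector field on `ℝ³`. -/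
def jac3 (u : V3 → V3) (y : V3) : Matrix (Fin 3) (Fin 3) ℝ :=
  Matrix.of fun i j => fderiv ℝ u y (Pi.single j 1) i

/-- Surface gradient `∇_Γ φ = (∂_α φ) g^α` (curvilinear definition). -/
def gradGamma (R : V2 → V3) (φ : V2 → ℝ) (ξ : V2) : V3 :=
  ∑ α, pd2 φ α ξ • gcon R α ξ

/-- Covariant derivative `∇_Γ u = (P ∂_α u) ⊗ g^α` (curvilinear definition). -/
def covDer (R : V2 → V3) (u : V2 → V3) (ξ : V2) : Matrix (Fin 3) (Fin 3) ℝ :=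
  ∑ α, outer ((Pmat R ξ).mulVec (pd2 u α ξ)) (gcon R α ξ)

/-- Surface divergence `div_Γ u = ∂_α u · g^α` (curvilinear definition). -/
def divGamma (R : V2 → V3) (u : V2 → V3) (ξ : V2) : ℝ :=
  ∑ α, dot3 (pd2 u α ξ) (gcon R α ξ)

/-- Entrywise partial derivative `∂_γ T` of a matrix-valued field. -/
def pdMat (T : V2 → Matrix (Fin 3) (Fin 3) ℝ) (γ : Fin 2) (ξ : V2) :
    Matrix (Fin 3) (Fin 3) ℝ :=
  Matrix.of fun i j => pd2 (fun ξ' => T ξ' i j) γ ξ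

/-- Surface divergence `div_Γ T = (∂_α T)ᵀ g^α` of an operator-valued field. -/
def divGammaMat (R : V2 → V3) (T : V2 → Matrix (Fin 3) (Fin 3) ℝ) (ξ : V2) : V3 :=
  ∑ α, (pdMat T α ξ)ᵀ.mulVec (gcon R α ξ)

/-- Surface rate-of-strain tensor `E(u) = ½(∇_Γ u + (∇_Γ u)ᵀ)`. -/
def strain (R : V2 → V3) (u : V2 → V3) (ξ : V2) : Matrix (Fin 3) (Fin 3) ℝ :=
  (1/2 : ℝ) • (covDer R u ξ + (covDer R u ξ)ᵀ)

/-- The first two coordinates of a point of `ℝ³`. -/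
def emb2 (q : V3) : V2 := fun α => q α.castSucc

/-- Thin-film parametrization `R̃(ξ,ζ) = R(ξ) + ζ n(ξ)`. -/
def Rtilde (R : V2 → V3) (q : V3) : V3 := R (emb2 q) + q 2 • nrm R (emb2 q)

/-- Thin-film covariant basis `G_i = ∂_i R̃`. -/
def Gcov (R : V2 → V3) (i : Fin 3) (q : V3) : V3 := pd3 (Rtilde R) i q

/-- Thin-film metric `G_{ij} = G_i · G_j`. -/
def Gmat (R : V2 → V3) (q : V3) : Matrix (Fin 3) (Fin 3) ℝ :=
  Matrix.of fun i j => dot3 (Gcov R i q) (Gcov R j q)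

/-- Thin-film inverse metric `G^{ij}`. -/
def Ginv (R : V2 → V3) (q : V3) : Matrix (Fin 3) (Fin 3) ℝ := (Gmat R q)⁻¹

/-- Thin-film Christoffel symbols
`Γ̄^k_{ij} = ½ G^{kl}(∂_i G_{jl} + ∂_j G_{il} − ∂_l G_{ij})`. -/
def chrisT (R : V2 → V3) (k i j : Fin 3) (q : V3) : ℝ :=
  (1/2 : ℝ) * ∑ l, Ginv R q k l *
    (pd3 (fun q' => Gmat R q' j l) i q + pd3 (fun q' => Gmat R q' i l) j q
      - pd3 (fun q' => Gmat R q' i j) l q)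

section Algebra
open Matrix

lemma dot3_eq (a b : V3) : dot3 a b = a ⬝ᵥ b := rfl

lemma dot3_comm (a b : V3) : dot3 a b = dot3 b a := by
  simp [dot3, mul_comm]

lemma dot3_smul_left (t : ℝ) (a b : V3) : dot3 (t • a) b = t * dot3 a b := by
  simp only [dot3_eq, smul_dotProduct, smul_eq_mul]

lemma dot3_smul_right (t : ℝ) (a b : V3) : dot3 a (t • b) = t * dot3 a b := by
  simp only [dot3_eq, dotProduct_smul, smul_eq_mul]

lemma dot3_add_left (a b c : V3) : dot3 (a + b) c = dot3 a c + dot3 b c := by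
  simp only [dot3_eq, add_dotProduct]

lemma dot3_add_right (a b c : V3) : dot3 a (b + c) = dot3 a b + dot3 a c := by
  simp only [dot3_eq, dotProduct_add]

lemma dot3_sub_left (a b c : V3) : dot3 (a - b) c = dot3 a c - dot3 b c := by
  simp [dot3, sub_mul, Finset.sum_sub_distrib]

lemma dot3_sub_right (a b c : V3) : dot3 a (b - c) = dot3 a b - dot3 a c := by
  simp [dot3, mul_sub, Finset.sum_sub_distrib]

lemma dot3_sum_left {k : Type*} (s : Finset k) (f : k → V3) (b : V3) :
    dot3 (∑ j ∈ s, f j) b = ∑ j ∈ s, dot3 (f j) b := by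
  simp only [dot3, Finset.sum_apply, Finset.sum_mul]
  exact Finset.sum_comm

lemma dot3_sum_right {k : Type*} (s : Finset k) (f : k → V3) (b : V3) :
    dot3 b (∑ j ∈ s, f j) = ∑ j ∈ s, dot3 b (f j) := by
  simp only [dot3, Finset.sum_apply, Finset.mul_sum]
  exact Finset.sum_comm

lemma dot3_self_nonneg (a : V3) : 0 ≤ dot3 a a :=
  Finset.sum_nonneg fun i _ => mul_self_nonneg _

lemma dot3_self_eq_zero {a : V3} (h : dot3 a a = 0) : a = 0 := by
  funext i
  have h2 := (Finset.sum_eq_zero_iff_of_nonneg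
    (fun i (_ : i ∈ Finset.univ) => mul_self_nonneg (a i))).mp h i (Finset.mem_univ i)
  have := mul_self_eq_zero.mp h2
  simpa using this

lemma dot3_self_ne_zero {a : V3} (h : a ≠ 0) : dot3 a a ≠ 0 :=
  fun h0 => h (dot3_self_eq_zero h0)

/-- BAC-CAB rule. -/
lemma cross_triple (w a b : V3) :
    crossProduct w (crossProduct a b) = dot3 w b • a - dot3 w a • b := by
  funext i
  fin_cases i <;> simp [cross_apply, dot3, Fin.sum_univ_three] <;> ring

end Algebra
section Point
open Matrix

variable {R : V2 → V3} {ξ : V2}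

/-- Linear independence implies nonvanishing cross product. -/
lemma cross_ne_zero (h : LinearIndependent ℝ ![gcov R 0 ξ, gcov R 1 ξ]) :
    crossProduct (gcov R 0 ξ) (gcov R 1 ξ) ≠ 0 := by
  set a := gcov R 0 ξ with ha
  set b := gcov R 1 ξ with hb
  intro hc
  have minors : ∀ i j : Fin 3, a i * b j = a j * b i := by
    have h0 := congrFun hc 0
    have h1 := congrFun hc 1
    have h2 := congrFun hc 2
    simp [cross_apply] at h0 h1 h2
    intro i j
    fin_cases i <;> fin_cases j <;> simp <;> linarith
  rcases eq_or_ne a 0 with h0 | h0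
  · exact (h.ne_zero 0 (by simpa using h0)).elim
  · obtain ⟨k, hk⟩ : ∃ k, a k ≠ 0 := by
      by_contra hK; push_neg at hK; exact h0 (funext fun i => hK i)
    have hdep : b = (b k / a k) • a := by
      funext j
      have := minors j k
      rw [Pi.smul_apply, smul_eq_mul, div_mul_eq_mul_div, eq_div_iff hk]
      linarith [minors j k]
    have := Fintype.linearIndependent_iff.mp h ![b k / a k, -1] ?_ 1
    · norm_num at this
    · show ∑ i : Fin 2, _ • ![a, b] i = 0
      rw [Fin.sum_univ_two]
      show (b k / a k) • a + (-1 : ℝ) • b = 0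
      rw [← hdep]
      module

end Point
section Point2
open Matrix

lemma dot3_cross_left (a b : V3) : dot3 a (crossProduct a b) = 0 := by
  simp [dot3, cross_apply, Fin.sum_univ_three]; ring

lemma dot3_cross_right (a b : V3) : dot3 b (crossProduct a b) = 0 := by
  simp [dot3, cross_apply, Fin.sum_univ_three]; ring

variable {R : V2 → V3} {ξ : V2}
  (hc : crossProduct (gcov R 0 ξ) (gcov R 1 ξ) ≠ 0)

include hc

lemma dot3_cross_pos : 0 < dot3 (crossProduct (gcov R 0 ξ) (gcov R 1 ξ))
    (crossProduct (gcov R 0 ξ) (gcov R 1 ξ)) :=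
  lt_of_le_of_ne (dot3_self_nonneg _) (Ne.symm (dot3_self_ne_zero hc))

lemma norm3_cross_ne : norm3 (crossProduct (gcov R 0 ξ) (gcov R 1 ξ)) ≠ 0 := by
  have := dot3_cross_pos hc
  simp only [norm3]
  positivity

lemma sq_norm3_cross : norm3 (crossProduct (gcov R 0 ξ) (gcov R 1 ξ)) *
    norm3 (crossProduct (gcov R 0 ξ) (gcov R 1 ξ))
    = dot3 (crossProduct (gcov R 0 ξ) (gcov R 1 ξ)) (crossProduct (gcov R 0 ξ) (gcov R 1 ξ)) :=
  Real.mul_self_sqrt (dot3_self_nonneg _)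

lemma dot3_nrm_nrm : dot3 (nrm R ξ) (nrm R ξ) = 1 := by
  rw [nrm, dot3_smul_left, dot3_smul_right, ← mul_assoc, ← mul_inv (norm3 _),
    sq_norm3_cross hc]
  exact inv_mul_cancel₀ (dot3_self_ne_zero hc)

lemma dot3_gcov_nrm (α : Fin 2) : dot3 (gcov R α ξ) (nrm R ξ) = 0 := by
  rw [nrm, dot3_smul_right]
  fin_cases α
  · exact mul_eq_zero_of_right _ (dot3_cross_left _ _)
  · exact mul_eq_zero_of_right _ (dot3_cross_right _ _)

lemma dot3_nrm_gcov (α : Fin 2) : dot3 (nrm R ξ) (gcov R α ξ) = 0 := by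
  rw [dot3_comm]; exact dot3_gcov_nrm hc α

lemma det_gmat_ne : (gmat R ξ).det ≠ 0 := by
  have : (gmat R ξ).det = dot3 (crossProduct (gcov R 0 ξ) (gcov R 1 ξ))
      (crossProduct (gcov R 0 ξ) (gcov R 1 ξ)) := by
    rw [Matrix.det_fin_two]
    simp only [gmat, Matrix.of_apply, dot3_eq]
    rw [cross_dot_cross]
  rw [this]
  exact dot3_self_ne_zero hc

lemma ginv_mul_gmat : ginv R ξ * gmat R ξ = 1 :=
  Matrix.nonsing_inv_mul _ (isUnit_iff_ne_zero.mpr (det_gmat_ne hc))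

lemma dot3_gcon_gcov (α β : Fin 2) :
    dot3 (gcon R α ξ) (gcov R β ξ) = if α = β then 1 else 0 := by
  rw [gcon, dot3_sum_left]
  have h1 : ∀ σ : Fin 2, dot3 (ginv R ξ α σ • gcov R σ ξ) (gcov R β ξ)
      = ginv R ξ α σ * gmat R ξ σ β := by
    intro σ; rw [dot3_smul_left]; rfl
  rw [Finset.sum_congr rfl (fun σ _ => h1 σ)]
  have h2 := congrFun (congrFun (ginv_mul_gmat hc) α) β
  rw [Matrix.mul_apply] at h2
  rw [h2, Matrix.one_apply]

lemma dot3_gcon_nrm (α : Fin 2) : dot3 (gcon R α ξ) (nrm R ξ) = 0 := by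
  rw [gcon, dot3_sum_left]
  apply Finset.sum_eq_zero
  intro σ _
  rw [dot3_smul_left, dot3_gcov_nrm hc, mul_zero]

omit hc

lemma Pmat_mulVec (v : V3) :
    (Pmat R ξ).mulVec v = v - dot3 (nrm R ξ) v • nrm R ξ := by
  funext i
  fin_cases i <;>
    simp [Pmat, Matrix.mulVec, dotProduct, Matrix.one_apply, Fin.sum_univ_three, dot3,
      Fin.isValue, sub_mul] <;>
    ring

include hc

/-- A vector orthogonal to `g₀, g₁, n` vanishes. -/
lemma perp_eq_zero {w : V3} (h0 : dot3 w (gcov R 0 ξ) = 0) (h1 : dot3 w (gcov R 1 ξ) = 0)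
    (hn : dot3 w (nrm R ξ) = 0) : w = 0 := by
  set c := crossProduct (gcov R 0 ξ) (gcov R 1 ξ) with hcdef
  have hwc : dot3 w c = 0 := by
    have h' : dot3 w (nrm R ξ) = (norm3 c)⁻¹ * dot3 w c := by
      rw [nrm, dot3_smul_right]
    rw [h'] at hn
    rcases mul_eq_zero.mp hn with h | h
    · exact absurd (inv_eq_zero.mp h) (norm3_cross_ne hc)
    · exact h
  have htriple : crossProduct w c = 0 := by
    rw [hcdef, cross_triple, h1, h0]
    simp
  have hlag : dot3 (crossProduct w c) (crossProduct w c)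
      = dot3 w w * dot3 c c - dot3 w c * dot3 c w := by
    simp only [dot3_eq]
    rw [cross_dot_cross]
  rw [htriple, hwc, dot3_comm c w, hwc] at hlag
  have h00 : dot3 (0 : V3) 0 = 0 := by simp [dot3]
  rw [h00] at hlag
  have : dot3 w w * dot3 c c = 0 := by linarith
  rcases mul_eq_zero.mp this with h | h
  · exact dot3_self_eq_zero h
  · exact absurd h (dot3_self_ne_zero hc)

/-- Expansion of a vector in the frame `g^0, g^1, n` with covariant coefficients. -/
lemma expand_vec (v : V3) :
    v = (∑ β, dot3 v (gcov R β ξ) • gcon R β ξ) + dot3 v (nrm R ξ) • nrm R ξ := by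
  have hw := sub_eq_zero.mpr (Eq.refl v)
  set w := v - ((∑ β, dot3 v (gcov R β ξ) • gcon R β ξ) + dot3 v (nrm R ξ) • nrm R ξ) with hwdef
  have hdot : ∀ z : V3, dot3 w z = dot3 v z
      - ((∑ β, dot3 v (gcov R β ξ) * dot3 (gcon R β ξ) z) + dot3 v (nrm R ξ) * dot3 (nrm R ξ) z) := by
    intro z
    rw [hwdef, dot3_sub_left, dot3_add_left, dot3_sum_left, dot3_smul_left]
    congr 2
    exact Finset.sum_congr rfl fun β _ => dot3_smul_left _ _ _
  have hzero : w = 0 := by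
    apply perp_eq_zero hc
    · rw [hdot]
      simp [dot3_gcon_gcov hc, dot3_nrm_gcov hc, Fin.sum_univ_two]
    · rw [hdot]
      simp [dot3_gcon_gcov hc, dot3_nrm_gcov hc, Fin.sum_univ_two]
    · rw [hdot]
      simp [dot3_gcon_nrm hc, dot3_nrm_nrm hc]
  exact sub_eq_zero.mp hzero
end Point2
section CalcHelpers

variable {E' : Type*} [NormedAddCommGroup E'] [NormedSpace ℝ E']

/-- `pd2` of a smooth function is smooth. -/
lemma ContDiffAt.pd2 {f : V2 → E'} {ξ : V2} (hf : ContDiffAt ℝ (⊤ : ℕ∞) f ξ) (α : Fin 2) :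
    ContDiffAt ℝ (⊤ : ℕ∞) (pd2 f α) ξ := by
  have h1 : ContDiffAt ℝ (⊤ : ℕ∞) (fderiv ℝ f) ξ := hf.fderiv_right (by simp)
  have h2 : ContDiff ℝ (⊤ : ℕ∞) (fun L : V2 →L[ℝ] E' => L (Pi.single α (1:ℝ))) :=
    ContDiff.clm_apply contDiff_id contDiff_const
  exact h2.contDiffAt.comp ξ h1

/-- Component of a smooth `V3`-valued map is smooth. -/
lemma ContDiffAt.comp3 {f : V2 → V3} {ξ : V2} (hf : ContDiffAt ℝ (⊤ : ℕ∞) f ξ) (i : Fin 3) :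
    ContDiffAt ℝ (⊤ : ℕ∞) (fun ξ' => f ξ' i) ξ :=
  ((ContinuousLinearMap.proj (R := ℝ) (φ := fun _ : Fin 3 => ℝ) i).contDiff).contDiffAt.comp ξ hf

/-- Components of `pd2` of a differentiable map. -/
lemma pd2_apply {f : V2 → V3} {ξ : V2} (hf : DifferentiableAt ℝ f ξ) (α : Fin 2) (i : Fin 3) :
    pd2 f α ξ i = pd2 (fun ξ' => f ξ' i) α ξ := by
  have : (fun ξ' => f ξ' i)
      = (ContinuousLinearMap.proj (R := ℝ) (φ := fun _ : Fin 3 => ℝ) i) ∘ f := rfl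
  rw [pd2, pd2, this, fderiv_comp ξ (ContinuousLinearMap.differentiableAt _) hf]
  simp

/-- Leibniz rule for `pd2`. -/
lemma pd2_mul {f g : V2 → ℝ} {ξ : V2} (hf : DifferentiableAt ℝ f ξ)
    (hg : DifferentiableAt ℝ g ξ) (α : Fin 2) :
    pd2 (fun ξ' => f ξ' * g ξ') α ξ = pd2 f α ξ * g ξ + f ξ * pd2 g α ξ := by
  rw [pd2, fderiv_fun_mul hf hg]
  simp [pd2]
  ring

/-- `pd2` of a finite sum. -/
lemma pd2_sum {k : Type*} {s : Finset k} {f : k → V2 → ℝ} {ξ : V2}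
    (hf : ∀ j ∈ s, DifferentiableAt ℝ (f j) ξ) (α : Fin 2) :
    pd2 (fun ξ' => ∑ j ∈ s, f j ξ') α ξ = ∑ j ∈ s, pd2 (f j) α ξ := by
  rw [pd2, fderiv_fun_sum hf]
  simp [pd2]

/-- `pd2` of a locally constant function vanishes. -/
lemma pd2_locally_const {f : V2 → ℝ} {ξ : V2} {c : ℝ}
    (h : ∀ᶠ ξ' in nhds ξ, f ξ' = c) (α : Fin 2) : pd2 f α ξ = 0 := by
  rw [pd2, Filter.EventuallyEq.fderiv_eq (h.mono fun ξ' hξ' => hξ')]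
  simp

end CalcHelpers
section SecondDeriv

/-- Symmetry of second partial derivatives for smooth maps. -/
lemma pd2_pd2_symm {f : V2 → V3} {ξ : V2} (hf : ContDiffAt ℝ (⊤ : ℕ∞) f ξ) (α β : Fin 2) :
    pd2 (pd2 f β) α ξ = pd2 (pd2 f α) β ξ := by
  have hdf : DifferentiableAt ℝ (fderiv ℝ f) ξ :=
    (hf.fderiv_right (m := 1) (by exact WithTop.coe_le_coe.mpr le_top)).differentiableAt one_ne_zero
  have key : ∀ v w : V2, fderiv ℝ (fun ξ' => fderiv ℝ f ξ' v) ξ w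
      = fderiv ℝ (fderiv ℝ f) ξ w v := by
    intro v w
    rw [fderiv_clm_apply hdf (differentiableAt_const v)]
    simp
  have hsymm := hf.isSymmSndFDerivAt (by rw [minSmoothness_of_isRCLikeNormedField]; exact WithTop.coe_le_coe.mpr le_top)
  show fderiv ℝ (fun ξ' => fderiv ℝ f ξ' (Pi.single β 1)) ξ (Pi.single α 1)
      = fderiv ℝ (fun ξ' => fderiv ℝ f ξ' (Pi.single α 1)) ξ (Pi.single β 1)
  rw [key, key]
  exact hsymm _ _

end SecondDeriv
section Smooth
open Matrix

lemma ContDiffAt.dot3fun {f g : V2 → V3} {ξ : V2} (hf : ContDiffAt ℝ (⊤ : ℕ∞) f ξ)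
    (hg : ContDiffAt ℝ (⊤ : ℕ∞) g ξ) :
    ContDiffAt ℝ (⊤ : ℕ∞) (fun ξ' => dot3 (f ξ') (g ξ')) ξ := by
  simp only [dot3]
  exact ContDiffAt.sum fun i _ => (hf.comp3 i).mul (hg.comp3 i)

/-- Explicit inverse of a 2×2 real matrix. -/
lemma inv_fin_two (M : Matrix (Fin 2) (Fin 2) ℝ) :
    M⁻¹ = M.det⁻¹ • !![M 1 1, -M 0 1; -M 1 0, M 0 0] := by
  rw [Matrix.inv_def, Matrix.adjugate_fin_two, Ring.inverse_eq_inv']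

lemma covDer_apply (R : V2 → V3) (w : V2 → V3) (ξ : V2) (i j : Fin 3) :
    covDer R w ξ i j = ∑ α, (Pmat R ξ).mulVec (pd2 w α ξ) i * gcon R α ξ j := by
  simp [covDer, outer, Matrix.sum_apply]

lemma strain_apply (R : V2 → V3) (w : V2 → V3) (ξ : V2) (i j : Fin 3) :
    strain R w ξ i j = (1/2 : ℝ) * (covDer R w ξ i j + covDer R w ξ j i) := by
  simp [strain, Matrix.transpose_apply]

variable {U : Set V2} {R : V2 → V3} {u : V2 → V3} {ξ : V2}
  (hU : IsOpen U) (hR : ContDiffOn ℝ (⊤ : ℕ∞) R U)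
  (hImm : ∀ ξ' ∈ U, LinearIndependent ℝ ![gcov R 0 ξ', gcov R 1 ξ'])
  (hu : ContDiffOn ℝ (⊤ : ℕ∞) u U) (hξ : ξ ∈ U)

include hU hR hξ

lemma cd_R : ContDiffAt ℝ (⊤ : ℕ∞) R ξ := hR.contDiffAt (hU.mem_nhds hξ)

lemma cd_gcov (α : Fin 2) : ContDiffAt ℝ (⊤ : ℕ∞) (gcov R α) ξ :=
  (cd_R hU hR hξ).pd2 α

lemma cd_cross : ContDiffAt ℝ (⊤ : ℕ∞)
    (fun ξ' => crossProduct (gcov R 0 ξ') (gcov R 1 ξ')) ξ := by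
  rw [contDiffAt_pi]
  intro i
  have h0 := cd_gcov hU hR hξ 0
  have h1 := cd_gcov hU hR hξ 1
  fin_cases i <;>
    simp only [cross_apply, Matrix.cons_val_zero, Matrix.cons_val_one, Matrix.head_cons,
      Matrix.cons_val_two, Matrix.tail_cons] <;>
    exact ((h0.comp3 _).mul (h1.comp3 _)).sub ((h0.comp3 _).mul (h1.comp3 _))

include hImm

lemma cross_ne' : crossProduct (gcov R 0 ξ) (gcov R 1 ξ) ≠ 0 :=
  cross_ne_zero (hImm ξ hξ)

lemma cd_norm3cross : ContDiffAt ℝ (⊤ : ℕ∞)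
    (fun ξ' => norm3 (crossProduct (gcov R 0 ξ') (gcov R 1 ξ'))) ξ := by
  have hcd : ContDiffAt ℝ (⊤ : ℕ∞) (fun ξ' =>
      dot3 (crossProduct (gcov R 0 ξ') (gcov R 1 ξ'))
           (crossProduct (gcov R 0 ξ') (gcov R 1 ξ'))) ξ :=
    (cd_cross hU hR hξ).dot3fun (cd_cross hU hR hξ)
  have hne : dot3 (crossProduct (gcov R 0 ξ) (gcov R 1 ξ))
      (crossProduct (gcov R 0 ξ) (gcov R 1 ξ)) ≠ 0 :=
    dot3_self_ne_zero (cross_ne' hU hR hImm hξ)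
  simp only [norm3]
  exact (Real.contDiffAt_sqrt hne).comp ξ hcd

lemma cd_nrm : ContDiffAt ℝ (⊤ : ℕ∞) (nrm R) ξ := by
  have h1 := (cd_norm3cross hU hR hImm hξ).inv (norm3_cross_ne (cross_ne' hU hR hImm hξ))
  rw [contDiffAt_pi]
  intro i
  have : (fun ξ' => nrm R ξ' i) = fun ξ' =>
      (norm3 (crossProduct (gcov R 0 ξ') (gcov R 1 ξ')))⁻¹ *
        crossProduct (gcov R 0 ξ') (gcov R 1 ξ') i := rfl
  rw [this]
  exact h1.mul ((cd_cross hU hR hξ).comp3 i)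

omit hImm

lemma cd_gmat (α β : Fin 2) : ContDiffAt ℝ (⊤ : ℕ∞) (fun ξ' => gmat R ξ' α β) ξ :=
  (cd_gcov hU hR hξ α).dot3fun (cd_gcov hU hR hξ β)

lemma cd_detg : ContDiffAt ℝ (⊤ : ℕ∞) (fun ξ' => (gmat R ξ').det) ξ := by
  have : (fun ξ' => (gmat R ξ').det)
      = fun ξ' => gmat R ξ' 0 0 * gmat R ξ' 1 1 - gmat R ξ' 0 1 * gmat R ξ' 1 0 := by
    funext ξ'; rw [Matrix.det_fin_two]
  rw [this]
  exact ((cd_gmat hU hR hξ 0 0).mul (cd_gmat hU hR hξ 1 1)).sub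
    ((cd_gmat hU hR hξ 0 1).mul (cd_gmat hU hR hξ 1 0))

include hImm

lemma cd_ginv (α β : Fin 2) : ContDiffAt ℝ (⊤ : ℕ∞) (fun ξ' => ginv R ξ' α β) ξ := by
  have hrepr : (fun ξ' => ginv R ξ' α β) = fun ξ' => ((gmat R ξ').det)⁻¹ *
      (!![gmat R ξ' 1 1, -(gmat R ξ' 0 1); -(gmat R ξ' 1 0), gmat R ξ' 0 0] α β) := by
    funext ξ'
    rw [ginv, inv_fin_two, Matrix.smul_apply, smul_eq_mul]
  have hdetinv : ContDiffAt ℝ (⊤ : ℕ∞) (fun ξ' => ((gmat R ξ').det)⁻¹) ξ :=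
    (cd_detg hU hR hξ).inv (det_gmat_ne (cross_ne' hU hR hImm hξ))
  rw [hrepr]
  fin_cases α <;> fin_cases β <;>
    simp only [Matrix.cons_val_zero, Matrix.cons_val_one, Matrix.head_cons, Matrix.head_fin_const,
      Matrix.of_apply, Matrix.cons_val', Matrix.empty_val', Matrix.cons_val_fin_one,
      Fin.zero_eta, Fin.mk_one]
  · exact hdetinv.mul (cd_gmat hU hR hξ 1 1)
  · exact hdetinv.mul (cd_gmat hU hR hξ 0 1).neg
  · exact hdetinv.mul (cd_gmat hU hR hξ 1 0).neg
  · exact hdetinv.mul (cd_gmat hU hR hξ 0 0)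

lemma cd_gcon (α : Fin 2) : ContDiffAt ℝ (⊤ : ℕ∞) (gcon R α) ξ := by
  rw [contDiffAt_pi]
  intro i
  have : (fun ξ' => gcon R α ξ' i)
      = fun ξ' => ∑ β, ginv R ξ' α β * gcov R β ξ' i := by
    funext ξ'
    simp [gcon, Finset.sum_apply]
  rw [this]
  exact ContDiffAt.sum fun β _ =>
    (cd_ginv hU hR hImm hξ α β).mul ((cd_gcov hU hR hξ β).comp3 i)

lemma cd_covDer {w : V2 → V3} (hw : ContDiffAt ℝ (⊤ : ℕ∞) w ξ) (i j : Fin 3) :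
    ContDiffAt ℝ (⊤ : ℕ∞) (fun ξ' => covDer R w ξ' i j) ξ := by
  have hrepr : (fun ξ' => covDer R w ξ' i j) = fun ξ' =>
      ∑ α, (pd2 w α ξ' i - dot3 (nrm R ξ') (pd2 w α ξ') * nrm R ξ' i) * gcon R α ξ' j := by
    funext ξ'
    rw [covDer_apply]
    congr 1
    funext α
    rw [Pmat_mulVec]
    simp
  rw [hrepr]
  refine ContDiffAt.sum fun α _ => ContDiffAt.mul ?_ ((cd_gcon hU hR hImm hξ α).comp3 j)
  exact (((hw.pd2 α).comp3 i).sub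
    (((cd_nrm hU hR hImm hξ).dot3fun (hw.pd2 α)).mul ((cd_nrm hU hR hImm hξ).comp3 i)))

lemma cd_strain {w : V2 → V3} (hw : ContDiffAt ℝ (⊤ : ℕ∞) w ξ) (i j : Fin 3) :
    ContDiffAt ℝ (⊤ : ℕ∞) (fun ξ' => strain R w ξ' i j) ξ := by
  have hrepr : (fun ξ' => strain R w ξ' i j)
      = fun ξ' => (1/2 : ℝ) * (covDer R w ξ' i j + covDer R w ξ' j i) := by
    funext ξ'; rw [strain_apply]
  rw [hrepr]
  exact contDiffAt_const.mul ((cd_covDer hU hR hImm hξ hw i j).add (cd_covDer hU hR hImm hξ hw j i))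

include hu

lemma cd_u : ContDiffAt ℝ (⊤ : ℕ∞) u ξ := hu.contDiffAt (hU.mem_nhds hξ)

end Smooth
section MatAlg
open Matrix

lemma outer_mulVec (a b w : V3) : (outer a b).mulVec w = dot3 b w • a := by
  funext i
  simp only [outer, Matrix.mulVec, dotProduct, Matrix.of_apply, Pi.smul_apply, smul_eq_mul,
    dot3, Finset.sum_mul]
  exact Finset.sum_congr rfl fun j _ => by ring

lemma sum_mulVec {k : Type*} (s : Finset k) (M : k → Matrix (Fin 3) (Fin 3) ℝ) (w : V3) :
    (∑ j ∈ s, M j).mulVec w = ∑ j ∈ s, (M j).mulVec w := by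
  funext i
  simp only [Matrix.mulVec, dotProduct, Finset.sum_apply, Matrix.sum_apply, Finset.sum_mul]
  exact Finset.sum_comm

lemma mulVec_sumsmul {k : Type*} (s : Finset k) (M : Matrix (Fin 3) (Fin 3) ℝ)
    (t : k → ℝ) (w : k → V3) :
    M.mulVec (∑ j ∈ s, t j • w j) = ∑ j ∈ s, t j • M.mulVec (w j) := by
  funext i
  simp only [Matrix.mulVec, dotProduct, Finset.sum_apply, Pi.smul_apply, smul_eq_mul,
    Finset.mul_sum]
  rw [Finset.sum_comm]
  exact Finset.sum_congr rfl fun j _ => Finset.sum_congr rfl fun l _ => by ring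

lemma dot3_transpose_mulVec (M : Matrix (Fin 3) (Fin 3) ℝ) (a b : V3) :
    dot3 a (Mᵀ.mulVec b) = dot3 b (M.mulVec a) := by
  simp only [dot3, Matrix.mulVec, dotProduct, Matrix.transpose_apply, Finset.mul_sum]
  rw [Finset.sum_comm]
  exact Finset.sum_congr rfl fun i _ => Finset.sum_congr rfl fun j _ => by ring

lemma trace_outer_mul (a b : V3) (M : Matrix (Fin 3) (Fin 3) ℝ) :
    Matrix.trace (outer a b * M) = dot3 b (M.mulVec a) := by
  simp only [Matrix.trace, Matrix.diag, Matrix.mul_apply, outer, Matrix.of_apply,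
    dot3, Matrix.mulVec, dotProduct, Finset.mul_sum]
  rw [Finset.sum_comm]
  exact Finset.sum_congr rfl fun i _ => Finset.sum_congr rfl fun j _ => by ring

lemma trace_shapeOp_mul (R : V2 → V3) (ξ : V2) (M : Matrix (Fin 3) (Fin 3) ℝ) :
    Matrix.trace (shapeOp R ξ * M)
      = ∑ α, ∑ β, bcov R α β ξ * dot3 (gcon R β ξ) (M.mulVec (gcon R α ξ)) := by
  rw [shapeOp, Matrix.sum_mul, Matrix.trace_sum]
  refine Finset.sum_congr rfl fun α _ => ?_
  rw [Matrix.sum_mul, Matrix.trace_sum]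
  refine Finset.sum_congr rfl fun β _ => ?_
  rw [Matrix.smul_mul, Matrix.trace_smul, trace_outer_mul, smul_eq_mul]

lemma outer_sub_left (a b c : V3) : outer (a - b) c = outer a c - outer b c := by
  ext i j; simp [outer, sub_mul]

lemma outer_smul_left (t : ℝ) (a c : V3) : outer (t • a) c = t • outer a c := by
  ext i j; simp [outer]; ring

lemma outer_sum_left {k : Type*} (s : Finset k) (f : k → V3) (c : V3) :
    outer (∑ j ∈ s, f j) c = ∑ j ∈ s, outer (f j) c := by
  ext i j; simp [outer, Finset.sum_mul, Finset.sum_apply, Matrix.sum_apply]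

lemma outer_neg_left (a c : V3) : outer (-a) c = -outer a c := by
  ext i j; simp [outer]

end MatAlg
section CalcHelpers2

lemma DifferentiableAt.comp3' {f : V2 → V3} {ξ : V2} (hf : DifferentiableAt ℝ f ξ) (i : Fin 3) :
    DifferentiableAt ℝ (fun ξ' => f ξ' i) ξ :=
  (ContinuousLinearMap.proj (R := ℝ) (φ := fun _ : Fin 3 => ℝ) i).differentiableAt.comp ξ hf

lemma pd2_dot3 {f g : V2 → V3} {ξ : V2} (hf : DifferentiableAt ℝ f ξ)
    (hg : DifferentiableAt ℝ g ξ) (α : Fin 2) :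
    pd2 (fun ξ' => dot3 (f ξ') (g ξ')) α ξ
      = dot3 (pd2 f α ξ) (g ξ) + dot3 (f ξ) (pd2 g α ξ) := by
  have h1 : (fun ξ' => dot3 (f ξ') (g ξ')) = fun ξ' => ∑ i, f ξ' i * g ξ' i := rfl
  rw [h1, pd2_sum (f := fun i ξ' => f ξ' i * g ξ' i) (fun i _ => (hf.comp3' i).mul (hg.comp3' i)) α]
  have h2 : ∀ i : Fin 3, pd2 (fun ξ' => f ξ' i * g ξ' i) α ξ
      = pd2 f α ξ i * g ξ i + f ξ i * pd2 g α ξ i := by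
    intro i
    rw [pd2_mul (hf.comp3' i) (hg.comp3' i) α, pd2_apply hf α i, pd2_apply hg α i]
  rw [Finset.sum_congr rfl fun i _ => h2 i]
  rw [dot3, dot3, ← Finset.sum_add_distrib]

lemma pd2_smulV {s : V2 → ℝ} {h : V2 → V3} {ξ : V2} (hs : DifferentiableAt ℝ s ξ)
    (hh : DifferentiableAt ℝ h ξ) (α : Fin 2) :
    pd2 (fun ξ' => s ξ' • h ξ') α ξ = pd2 s α ξ • h ξ + s ξ • pd2 h α ξ := by
  have hsh : DifferentiableAt ℝ (fun ξ' => s ξ' • h ξ') ξ := hs.smul hh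
  funext i
  have e1 : pd2 (fun ξ' => s ξ' • h ξ') α ξ i = pd2 (fun ξ' => s ξ' * h ξ' i) α ξ :=
    pd2_apply hsh α i
  rw [e1, pd2_mul hs (hh.comp3' i) α, ← pd2_apply hh α i]
  simp

lemma pd2_subV {f g : V2 → V3} {ξ : V2} (hf : DifferentiableAt ℝ f ξ)
    (hg : DifferentiableAt ℝ g ξ) (α : Fin 2) :
    pd2 (fun ξ' => f ξ' - g ξ') α ξ = pd2 f α ξ - pd2 g α ξ := by
  simp only [pd2, fderiv_fun_sub hf hg]
  rfl

end CalcHelpers2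
section Point3
open Matrix

variable {R : V2 → V3} {ξ : V2}
  (hc : crossProduct (gcov R 0 ξ) (gcov R 1 ξ) ≠ 0)

include hc

lemma dot3_Pv_nrm (v : V3) : dot3 ((Pmat R ξ).mulVec v) (nrm R ξ) = 0 := by
  rw [Pmat_mulVec, dot3_sub_left, dot3_smul_left, dot3_nrm_nrm hc, mul_one,
    dot3_comm v (nrm R ξ), sub_self]

lemma covDer_mulVec_nrm (w : V2 → V3) :
    (covDer R w ξ).mulVec (nrm R ξ) = 0 := by
  rw [covDer, sum_mulVec]
  apply Finset.sum_eq_zero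
  intro α _
  rw [outer_mulVec, dot3_gcon_nrm hc, zero_smul]

lemma covDerT_mulVec_nrm (w : V2 → V3) :
    (covDer R w ξ)ᵀ.mulVec (nrm R ξ) = 0 := by
  rw [covDer, Matrix.transpose_sum, sum_mulVec]
  apply Finset.sum_eq_zero
  intro α _
  have ht : (outer ((Pmat R ξ).mulVec (pd2 w α ξ)) (gcon R α ξ))ᵀ
      = outer (gcon R α ξ) ((Pmat R ξ).mulVec (pd2 w α ξ)) := by
    ext i j; simp [outer, Matrix.transpose_apply, mul_comm]
  rw [ht, outer_mulVec, dot3_Pv_nrm hc, zero_smul]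

lemma strain_mulVec_nrm (w : V2 → V3) :
    (strain R w ξ).mulVec (nrm R ξ) = 0 := by
  rw [strain, Matrix.smul_mulVec, Matrix.add_mulVec, covDer_mulVec_nrm hc,
    covDerT_mulVec_nrm hc, add_zero, smul_zero]

end Point3
section Identities
open Matrix

variable {U : Set V2} {R : V2 → V3} {u : V2 → V3} {ξ : V2}
  (hU : IsOpen U) (hR : ContDiffOn ℝ (⊤ : ℕ∞) R U)
  (hImm : ∀ ξ' ∈ U, LinearIndependent ℝ ![gcov R 0 ξ', gcov R 1 ξ'])
  (hu : ContDiffOn ℝ (⊤ : ℕ∞) u U) (hξ : ξ ∈ U)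

include hU hR hImm hξ

lemma pd2_nrm_dot_nrm (α : Fin 2) : dot3 (pd2 (nrm R) α ξ) (nrm R ξ) = 0 := by
  have hdn : DifferentiableAt ℝ (nrm R) ξ := (cd_nrm hU hR hImm hξ).differentiableAt (by simp)
  have h0 : pd2 (fun ξ' => dot3 (nrm R ξ') (nrm R ξ')) α ξ = 0 :=
    pd2_locally_const (Filter.eventually_of_mem (hU.mem_nhds hξ)
      (fun ξ' hξ' => dot3_nrm_nrm (cross_ne_zero (hImm ξ' hξ')))) α
  rw [pd2_dot3 hdn hdn α] at h0
  linarith [h0, dot3_comm (nrm R ξ) (pd2 (nrm R) α ξ)]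

lemma pd2_nrm_dot_gcov (α β : Fin 2) :
    dot3 (pd2 (nrm R) α ξ) (gcov R β ξ) = - bcov R α β ξ := by
  have hdn : DifferentiableAt ℝ (nrm R) ξ := (cd_nrm hU hR hImm hξ).differentiableAt (by simp)
  have hdg : DifferentiableAt ℝ (gcov R β) ξ := (cd_gcov hU hR hξ β).differentiableAt (by simp)
  have h0 : pd2 (fun ξ' => dot3 (nrm R ξ') (gcov R β ξ')) α ξ = 0 :=
    pd2_locally_const (Filter.eventually_of_mem (hU.mem_nhds hξ)
      (fun ξ' hξ' => dot3_nrm_gcov (cross_ne_zero (hImm ξ' hξ')) β)) α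
  rw [pd2_dot3 hdn hdg α] at h0
  have hb : dot3 (nrm R ξ) (pd2 (gcov R β) α ξ) = bcov R α β ξ := rfl
  have hcm := dot3_comm (pd2 (nrm R) α ξ) (gcov R β ξ)
  linarith [h0]

lemma weingarten (α : Fin 2) :
    pd2 (nrm R) α ξ = -∑ β, bcov R α β ξ • gcon R β ξ := by
  have hc := cross_ne' hU hR hImm hξ
  have hexp := expand_vec hc (pd2 (nrm R) α ξ)
  rw [pd2_nrm_dot_nrm hU hR hImm hξ α, zero_smul, add_zero] at hexp
  have hco : ∀ β : Fin 2, dot3 (pd2 (nrm R) α ξ) (gcov R β ξ) • gcon R β ξ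
      = -(bcov R α β ξ • gcon R β ξ) := by
    intro β
    rw [pd2_nrm_dot_gcov hU hR hImm hξ α β, neg_smul]
  rw [Finset.sum_congr rfl fun β _ => hco β, Finset.sum_neg_distrib] at hexp
  exact hexp

lemma bcov_symm (α β : Fin 2) : bcov R α β ξ = bcov R β α ξ := by
  show dot3 (nrm R ξ) (pd2 (pd2 R β) α ξ) = dot3 (nrm R ξ) (pd2 (pd2 R α) β ξ)
  rw [pd2_pd2_symm (cd_R hU hR hξ) α β]

include hu

lemma pdMat_strain_mulVec_nrm (α : Fin 2) :
    (pdMat (strain R u) α ξ).mulVec (nrm R ξ)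
      = -((strain R u ξ).mulVec (pd2 (nrm R) α ξ)) := by
  have hcdu : ContDiffAt ℝ (⊤ : ℕ∞) u ξ := cd_u hU hR hImm hu hξ
  have hdn : DifferentiableAt ℝ (nrm R) ξ := (cd_nrm hU hR hImm hξ).differentiableAt (by simp)
  funext j
  have hdf : DifferentiableAt ℝ (fun ξ' (i : Fin 3) => strain R u ξ' j i) ξ := by
    rw [differentiableAt_pi]
    intro i
    exact (cd_strain hU hR hImm hξ hcdu j i).differentiableAt (by simp)
  have h0 : pd2 (fun ξ' => dot3 (fun i => strain R u ξ' j i) (nrm R ξ')) α ξ = 0 := by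
    refine pd2_locally_const (c := 0) (Filter.eventually_of_mem (hU.mem_nhds hξ) ?_) α
    intro ξ' hξ'
    have hz := congrFun (strain_mulVec_nrm (cross_ne_zero (hImm ξ' hξ')) u) j
    simpa [dot3, Matrix.mulVec, dotProduct] using hz
  rw [pd2_dot3 hdf hdn α] at h0
  have e1 : (pdMat (strain R u) α ξ).mulVec (nrm R ξ) j
      = dot3 (pd2 (fun ξ' (i : Fin 3) => strain R u ξ' j i) α ξ) (nrm R ξ) := by
    simp only [pdMat, Matrix.mulVec, dotProduct, Matrix.of_apply, dot3]
    refine Finset.sum_congr rfl fun i _ => ?_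
    rw [pd2_apply hdf α i]
  have e2 : dot3 (fun i => strain R u ξ j i) (pd2 (nrm R) α ξ)
      = ((strain R u ξ).mulVec (pd2 (nrm R) α ξ)) j := by
    simp [dot3, Matrix.mulVec, dotProduct]
  rw [e2] at h0
  rw [e1, Pi.neg_apply]
  linarith [h0]

lemma covDer_uT_eq :
    covDer R (fun ξ' => (Pmat R ξ').mulVec (u ξ')) ξ
      = covDer R u ξ + dot3 (u ξ) (nrm R ξ) • shapeOp R ξ := by
  have hc := cross_ne' hU hR hImm hξ
  have hcdn := cd_nrm hU hR hImm hξ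
  have hcdu := cd_u hU hR hImm hu hξ
  have hdn : DifferentiableAt ℝ (nrm R) ξ := hcdn.differentiableAt (by simp)
  have hdu : DifferentiableAt ℝ u ξ := hcdu.differentiableAt (by simp)
  have hds : DifferentiableAt ℝ (fun ξ' => dot3 (nrm R ξ') (u ξ')) ξ :=
    (hcdn.dot3fun hcdu).differentiableAt (by simp)
  have hrepr : (fun ξ' => (Pmat R ξ').mulVec (u ξ'))
      = fun ξ' => u ξ' - (fun ξ'' => dot3 (nrm R ξ'') (u ξ'')) ξ' • nrm R ξ' := by
    funext ξ'; rw [Pmat_mulVec]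
  have hP : ∀ α : Fin 2,
      (Pmat R ξ).mulVec (pd2 (fun ξ' => (Pmat R ξ').mulVec (u ξ')) α ξ)
      = (Pmat R ξ).mulVec (pd2 u α ξ)
        - dot3 (nrm R ξ) (u ξ) • pd2 (nrm R) α ξ := by
    intro α
    rw [hrepr, pd2_subV (g := fun ξ' => (fun ξ'' => dot3 (nrm R ξ'') (u ξ'')) ξ' • nrm R ξ') hdu (hds.smul hdn) α, pd2_smulV hds hdn α,
      Pmat_mulVec, Pmat_mulVec]
    have h1 : dot3 (nrm R ξ)
        (pd2 u α ξ - (pd2 (fun ξ'' => dot3 (nrm R ξ'') (u ξ'')) α ξ • nrm R ξ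
          + dot3 (nrm R ξ) (u ξ) • pd2 (nrm R) α ξ))
        = dot3 (nrm R ξ) (pd2 u α ξ) - pd2 (fun ξ'' => dot3 (nrm R ξ'') (u ξ'')) α ξ := by
      rw [dot3_sub_right, dot3_add_right, dot3_smul_right, dot3_smul_right,
        dot3_nrm_nrm hc, dot3_comm (nrm R ξ) (pd2 (nrm R) α ξ),
        pd2_nrm_dot_nrm hU hR hImm hξ α]
      ring
    rw [h1]
    module
  rw [covDer]
  rw [Finset.sum_congr rfl fun α (_ : α ∈ Finset.univ) => by
    rw [hP α, outer_sub_left, outer_smul_left, weingarten hU hR hImm hξ α,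
      outer_neg_left, outer_sum_left]]
  rw [Finset.sum_sub_distrib]
  have hBswap : ∑ x : Fin 2, ∑ y : Fin 2, outer (bcov R x y ξ • gcon R y ξ) (gcon R x ξ)
      = shapeOp R ξ := by
    rw [Finset.sum_comm, shapeOp]
    refine Finset.sum_congr rfl fun x _ => Finset.sum_congr rfl fun y _ => ?_
    rw [outer_smul_left]
    rw [bcov_symm hU hR hImm hξ]
  have hK : ∑ x : Fin 2, dot3 (nrm R ξ) (u ξ) •
        -∑ y : Fin 2, outer (bcov R x y ξ • gcon R y ξ) (gcon R x ξ)
      = -(dot3 (u ξ) (nrm R ξ) • shapeOp R ξ) := by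
    simp only [smul_neg]
    rw [Finset.sum_neg_distrib, ← Finset.smul_sum, hBswap, dot3_comm (u ξ) (nrm R ξ)]
  rw [hK, sub_neg_eq_add]
  rfl

end Identities

/-- Normal component of the surface divergence of the strain tensor:
`n · div_Γ E(u) = tr(B ∇_Γ u_T) - u_N tr(B²)`. -/
theorem stmt13
    (U : Set V2) (hU : IsOpen U)
    (R : V2 → V3) (hR : ContDiffOn ℝ (⊤ : ℕ∞) R U)
    (hImm : ∀ ξ ∈ U, LinearIndependent ℝ ![gcov R 0 ξ, gcov R 1 ξ])
    (u : V2 → V3) (hu : ContDiffOn ℝ (⊤ : ℕ∞) u U)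
    (ξ : V2) (hξ : ξ ∈ U) :
    dot3 (nrm R ξ) (divGammaMat R (strain R u) ξ)
      = Matrix.trace (shapeOp R ξ * covDer R (fun ξ' => (Pmat R ξ').mulVec (u ξ')) ξ)
        - dot3 (u ξ) (nrm R ξ) * Matrix.trace (shapeOp R ξ * shapeOp R ξ) := by
  have hc : crossProduct (gcov R 0 ξ) (gcov R 1 ξ) ≠ 0 := cross_ne_zero (hImm ξ hξ)
  set D := covDer R u ξ with hD
  set B := shapeOp R ξ with hB
  set uN := dot3 (u ξ) (nrm R ξ) with huN
  -- the common value
  set S0 := ∑ α, ∑ β, bcov R α β ξ * dot3 (gcon R β ξ) (D.mulVec (gcon R α ξ)) with hS0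
  set SB := ∑ α, ∑ β, bcov R α β ξ * dot3 (gcon R β ξ) (B.mulVec (gcon R α ξ)) with hSB
  -- LHS as a double sum over the strain tensor
  have hLHS : dot3 (nrm R ξ) (divGammaMat R (strain R u) ξ)
      = ∑ α, ∑ β, bcov R α β ξ * dot3 (gcon R α ξ) ((strain R u ξ).mulVec (gcon R β ξ)) := by
    rw [divGammaMat, dot3_sum_right]
    refine Finset.sum_congr rfl fun α _ => ?_
    rw [dot3_transpose_mulVec, pdMat_strain_mulVec_nrm hU hR hImm hu hξ α,
      weingarten hU hR hImm hξ α, Matrix.mulVec_neg, neg_neg, mulVec_sumsmul,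
      dot3_sum_right]
    exact Finset.sum_congr rfl fun β _ => by rw [dot3_smul_right]
  -- strain in terms of the covariant derivative
  have hE : ∀ a w : V3, dot3 a ((strain R u ξ).mulVec w)
      = (1/2 : ℝ) * (dot3 a (D.mulVec w) + dot3 w (D.mulVec a)) := by
    intro a w
    rw [strain, Matrix.smul_mulVec, Matrix.add_mulVec, dot3_smul_right,
      dot3_add_right, dot3_transpose_mulVec, hD]
  have hswap : (∑ α, ∑ β, bcov R α β ξ * dot3 (gcon R α ξ) (D.mulVec (gcon R β ξ))) = S0 := by
    rw [hS0, Finset.sum_comm]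
    exact Finset.sum_congr rfl fun x _ => Finset.sum_congr rfl fun y _ => by
      rw [bcov_symm hU hR hImm hξ]
  have hLHS2 : dot3 (nrm R ξ) (divGammaMat R (strain R u) ξ) = S0 := by
    rw [hLHS]
    have hterm : ∀ α β : Fin 2, bcov R α β ξ * dot3 (gcon R α ξ) ((strain R u ξ).mulVec (gcon R β ξ))
        = (1/2 : ℝ) * (bcov R α β ξ * dot3 (gcon R α ξ) (D.mulVec (gcon R β ξ)))
          + (1/2 : ℝ) * (bcov R α β ξ * dot3 (gcon R β ξ) (D.mulVec (gcon R α ξ))) := by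
      intro α β
      rw [hE]
      ring
    rw [Finset.sum_congr rfl fun α _ => Finset.sum_congr rfl fun β _ => hterm α β]
    have hsplit : ∀ α : Fin 2, (∑ β,
        ((1/2 : ℝ) * (bcov R α β ξ * dot3 (gcon R α ξ) (D.mulVec (gcon R β ξ)))
          + (1/2 : ℝ) * (bcov R α β ξ * dot3 (gcon R β ξ) (D.mulVec (gcon R α ξ)))))
        = (∑ β, (1/2 : ℝ) * (bcov R α β ξ * dot3 (gcon R α ξ) (D.mulVec (gcon R β ξ))))
          + ∑ β, (1/2 : ℝ) * (bcov R α β ξ * dot3 (gcon R β ξ) (D.mulVec (gcon R α ξ))) :=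
      fun α => Finset.sum_add_distrib
    rw [Finset.sum_congr rfl fun α _ => hsplit α, Finset.sum_add_distrib]
    have e1 : (∑ α, ∑ β, (1/2 : ℝ) * (bcov R α β ξ * dot3 (gcon R α ξ) (D.mulVec (gcon R β ξ))))
        = (1/2 : ℝ) * ∑ α, ∑ β, bcov R α β ξ * dot3 (gcon R α ξ) (D.mulVec (gcon R β ξ)) := by
      rw [Finset.mul_sum]
      exact Finset.sum_congr rfl fun α _ => by rw [Finset.mul_sum]
    have e2 : (∑ α, ∑ β, (1/2 : ℝ) * (bcov R α β ξ * dot3 (gcon R β ξ) (D.mulVec (gcon R α ξ))))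
        = (1/2 : ℝ) * S0 := by
      rw [hS0, Finset.mul_sum]
      exact Finset.sum_congr rfl fun α _ => by rw [Finset.mul_sum]
    rw [e1, e2, hswap]
    ring
  -- RHS computation
  have hT2 : Matrix.trace (B * B) = SB := by
    rw [hB, trace_shapeOp_mul]
  have hT1 : Matrix.trace (B * covDer R (fun ξ' => (Pmat R ξ').mulVec (u ξ')) ξ)
      = S0 + uN * SB := by
    rw [hB, trace_shapeOp_mul, covDer_uT_eq hU hR hImm hu hξ]
    have hterm : ∀ α β : Fin 2, bcov R α β ξ *
        dot3 (gcon R β ξ) ((covDer R u ξ + dot3 (u ξ) (nrm R ξ) • shapeOp R ξ).mulVec (gcon R α ξ))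
        = bcov R α β ξ * dot3 (gcon R β ξ) (D.mulVec (gcon R α ξ))
          + uN * (bcov R α β ξ * dot3 (gcon R β ξ) (B.mulVec (gcon R α ξ))) := by
      intro α β
      rw [Matrix.add_mulVec, Matrix.smul_mulVec, dot3_add_right, dot3_smul_right,
        ← hD, ← hB, ← huN]
      ring
    rw [Finset.sum_congr rfl fun α _ => Finset.sum_congr rfl fun β _ => hterm α β]
    rw [Finset.sum_congr rfl fun α (_ : α ∈ Finset.univ) => Finset.sum_add_distrib,
      Finset.sum_add_distrib, hS0]
    congr 1
    rw [hSB, Finset.mul_sum]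
    exact Finset.sum_congr rfl fun α _ => by rw [Finset.mul_sum]
  rw [hLHS2, hT1, hT2]
  ring
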